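/- Let d ≥ 1 and n ≥ 2d be integers. A set A ⊆ {0,1}ⁿ is an equivalent set for the class d-Junta if and only if A is a d-wise bipartite connected family. -/

import Mathlib

/-- The bipartite graph `B(i,j,k,z,A)` from Damaschke's characterization: left vertices
are `{0,1}^{d₂}` (the `Sum.inl` side), right vertices are `{0,1}^{d₂}` (the `Sum.inr`
side), and `(a',L)` is joined to `(a'',R)` iff some `a ∈ A` has `a|_i = a'`,
`a|_k = a''` and `a|_j = z`. -/
def JuntaBGraph {n d₁ d₂ : ℕ} (i k : Fin d₂ → Fin n) (j : Fin d₁ → Fin n)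
    (z : Fin d₁ → Bool) (A : Set (Fin n → Bool)) :
    SimpleGraph ((Fin d₂ → Bool) ⊕ (Fin d₂ → Bool)) where
  Adj u v :=
    match u, v with
    | Sum.inl a', Sum.inr a'' =>
        ∃ a ∈ A, (∀ t, a (i t) = a' t) ∧ (∀ t, a (k t) = a'' t) ∧ (∀ t, a (j t) = z t)
    | Sum.inr a'', Sum.inl a' =>
        ∃ a ∈ A, (∀ t, a (i t) = a' t) ∧ (∀ t, a (k t) = a'' t) ∧ (∀ t, a (j t) = z t)
    | _, _ => False
  symm := by
    constructor
    rintro (a' | a') (a'' | a'') h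
    · exact h.elim
    · exact h
    · exact h
    · exact h.elim
  loopless := by
    constructor
    rintro (a' | a') h
    · exact h
    · exact h

/-- `A ⊆ {0,1}ⁿ` is a `d`-wise bipartite connected family if for all `d₁ + d₂ = d`,
all tuples `i, k` of length `d₂` and `j` of length `d₁` whose `d₁ + 2d₂` entries are
distinct, and all `z ∈ {0,1}^{d₁}`, the graph `B(i,j,k,z,A)` is connected. -/
def IsBipartiteConnectedFamily (n d : ℕ) (A : Set (Fin n → Bool)) : Prop :=
  ∀ d₁ d₂ : ℕ, d₁ + d₂ = d →
    ∀ (i k : Fin d₂ → Fin n) (j : Fin d₁ → Fin n),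
      Function.Injective (Sum.elim (Sum.elim i k) j) →
      ∀ z : Fin d₁ → Bool, (JuntaBGraph i k j z A).Connected


/-- The variable `x_i` is relevant in the boolean function `f` if flipping the `i`-th
coordinate of some assignment changes the value of `f`. -/
def IsRelevant {n : ℕ} (f : (Fin n → Bool) → Bool) (i : Fin n) : Prop :=
  ∃ a : Fin n → Bool, f (Function.update a i false) ≠ f (Function.update a i true)

/-- The class `d`-Junta: boolean functions on `n` variables with at most `d` relevant
variables. -/
def Junta (n d : ℕ) : Set ((Fin n → Bool) → Bool) :=
  {f | Set.ncard {i | IsRelevant f i} ≤ d}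

/-- `A ⊆ {0,1}ⁿ` is an equivalent set for a class `C` of boolean functions if any two
distinct members of `C` differ on some point of `A`. -/
def IsEquivalentSetFor {n : ℕ} (A : Set (Fin n → Bool))
    (C : Set ((Fin n → Bool) → Bool)) : Prop :=
  ∀ f ∈ C, ∀ g ∈ C, f ≠ g → ∃ a ∈ A, f a ≠ g a

/-!
Both directions rest on one reformulation: `B(i,j,k,z,A)` is connected iff every pair of Boolean
labellings `F`, `G` of its left and right vertices that agree across every edge has
`F a' = G a''` for all `a'`, `a''`.

If `B` is disconnected, a pair with `F a' ≠ G a''` yields the two `d`-juntas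
`a ↦ [a|_j = z] F (a|_i)` and `a ↦ [a|_j = z] G (a|_k)`, which agree on `A` but differ at any
point `a` with `a|_i = a'`, `a|_k = a''`, `a|_j = z`.

Conversely, let `f ≠ g` be `d`-juntas agreeing on `A` and let `f b ≠ g b`. Put the common
relevant variables into `j` and pad the variables relevant only to `f` (resp. `g`) into `i`
(resp. `k`) of length `d - |j|`, which `n ≥ 2d` leaves room for. With `z = b|_j`, label the
left vertex `a'` by `f` at `b` with `b|_i` replaced by `a'`, and the right vertex `a''` by `g`
at `b` with `b|_k` replaced by `a''`. These labellings agree across edges, so connectivity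
forces `f b = g b`.
-/

open Function Set

section Relevance

variable {n : ℕ} {f : (Fin n → Bool) → Bool}

lemma IsRelevant.mem_of_dependsOn {s : Set (Fin n)} (hf : DependsOn f s) {x : Fin n}
    (hx : IsRelevant f x) : x ∈ s := by
  by_contra hxs
  obtain ⟨a, ha⟩ := hx
  refine ha (hf fun y hy => ?_)
  rw [update_of_ne (ne_of_mem_of_not_mem hy hxs), update_of_ne (ne_of_mem_of_not_mem hy hxs)]

lemma apply_update_of_not_isRelevant {x : Fin n} (hx : ¬IsRelevant f x) (a : Fin n → Bool)
    (v : Bool) : f (update a x v) = f a := by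
  have h : f (update a x false) = f (update a x true) := not_not.mp fun h => hx ⟨a, h⟩
  conv_rhs => rw [← update_eq_self x a]
  cases v <;> cases a x <;> simp [h]

lemma dependsOn_setOf_isRelevant (f : (Fin n → Bool) → Bool) :
    DependsOn f {x | IsRelevant f x} := by
  suffices ∀ (T : Finset (Fin n)) (a b : Fin n → Bool), (∀ x ∉ T, a x = b x) →
      (∀ x, IsRelevant f x → a x = b x) → f a = f b from
    fun a b h => this Finset.univ a b (by simp) h
  intro T
  induction T using Finset.induction with
  | empty => exact fun a b h _ => congrArg f (funext fun x => h x (Finset.notMem_empty x))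
  | insert x T _ ih =>
    intro a b hT hrel
    by_cases hx : IsRelevant f x
    · refine ih a b (fun y hy => ?_) hrel
      by_cases hyx : y = x
      · exact hyx ▸ hrel x hx
      · exact hT y (by simp [hyx, hy])
    · rw [← apply_update_of_not_isRelevant hx a (b x)]
      refine ih _ b (fun y hy => ?_) (fun y hy => ?_) <;> by_cases hyx : y = x
      · simp [hyx]
      · rw [update_of_ne hyx]; exact hT y (by simp [hyx, hy])
      · simp [hyx]
      · rw [update_of_ne hyx]; exact hrel y hy

lemma mem_junta_of_dependsOn {d : ℕ} {s : Set (Fin n)} (hf : DependsOn f s) (hs : s.ncard ≤ d) :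
    f ∈ Junta n d :=
  (ncard_le_ncard fun _ hx => IsRelevant.mem_of_dependsOn hf hx).trans hs

end Relevance

lemma Set.ncard_range_le {α β : Type*} [Fintype α] (f : α → β) :
    (range f).ncard ≤ Fintype.card α := by
  rw [← image_univ]
  exact (ncard_image_le finite_univ).trans (by simp)

section Tuples

variable {ι κ μ β γ : Type*}

lemma dependsOn_range_union (φ : (κ → β) → (μ → β) → γ) (i : κ → ι) (j : μ → ι) :
    DependsOn (fun a : ι → β => φ (a ∘ i) (a ∘ j)) (range i ∪ range j) := fun a b h => by
  have hi : a ∘ i = b ∘ i := funext fun t => h _ (.inl ⟨t, rfl⟩)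
  have hj : a ∘ j = b ∘ j := funext fun t => h _ (.inr ⟨t, rfl⟩)
  simp only [hi, hj]

lemma DependsOn.eq_of_comp_eq {f : (ι → β) → γ} {i : κ → ι} {j : μ → ι}
    (hf : DependsOn f (range i ∪ range j)) {a b : ι → β} (hi : a ∘ i = b ∘ i)
    (hj : a ∘ j = b ∘ j) : f a = f b :=
  hf <| by rintro _ (⟨t, rfl⟩ | ⟨t, rfl⟩) <;> [exact congrFun hi t; exact congrFun hj t]

lemma Function.Injective.extend_sumElim_sumElim_comp {i k : κ → ι} {j : μ → ι}
    (hinj : Injective (Sum.elim (Sum.elim i k) j)) (a' a'' : κ → β) (z : μ → β) (c : ι → β) :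
    extend (Sum.elim (Sum.elim i k) j) (Sum.elim (Sum.elim a' a'') z) c ∘ i = a' ∧
      extend (Sum.elim (Sum.elim i k) j) (Sum.elim (Sum.elim a' a'') z) c ∘ k = a'' ∧
      extend (Sum.elim (Sum.elim i k) j) (Sum.elim (Sum.elim a' a'') z) c ∘ j = z :=
  ⟨funext fun t => hinj.extend_apply _ c (.inl (.inl t)),
    funext fun t => hinj.extend_apply _ c (.inl (.inr t)),
    funext fun t => hinj.extend_apply _ c (.inr t)⟩

end Tuples

namespace SimpleGraph

variable {V : Type*} {G : SimpleGraph V}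

lemma Reachable.eq_of_forall_adj {β : Type*} {H : V → β} (hH : ∀ u v, G.Adj u v → H u = H v)
    {u v : V} (h : G.Reachable u v) : H u = H v := by
  obtain ⟨p⟩ := h
  induction p with
  | nil => rfl
  | cons hadj _ ih => exact (hH _ _ hadj).trans ih

lemma preconnected_iff_forall_bool :
    G.Preconnected ↔
      ∀ H : V → Bool, (∀ u v, G.Adj u v → H u = H v) → ∀ u v, H u = H v := by
  classical
  refine ⟨fun hG H hH u v => (hG u v).eq_of_forall_adj hH, fun h u v => ?_⟩
  have hreach := h (fun w => decide (G.Reachable u w)) (fun w w' hww' => by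
    simpa using ⟨fun hw => hw.trans hww'.reachable, fun hw => hw.trans hww'.symm.reachable⟩) u v
  simpa using hreach

end SimpleGraph

section JuntaBGraph

variable {n d₁ d₂ : ℕ} {i k : Fin d₂ → Fin n} {j : Fin d₁ → Fin n} {z : Fin d₁ → Bool}
  {A : Set (Fin n → Bool)}

lemma juntaBGraph_adj_inl_inr {a' a'' : Fin d₂ → Bool} :
    (JuntaBGraph i k j z A).Adj (.inl a') (.inr a'') ↔
      ∃ a ∈ A, a ∘ i = a' ∧ a ∘ k = a'' ∧ a ∘ j = z := by
  simp only [funext_iff, comp_apply]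
  rfl

lemma juntaBGraph_adj_of_mem {a : Fin n → Bool} (ha : a ∈ A) (hz : a ∘ j = z) :
    (JuntaBGraph i k j z A).Adj (.inl (a ∘ i)) (.inr (a ∘ k)) :=
  juntaBGraph_adj_inl_inr.mpr ⟨a, ha, rfl, rfl, hz⟩

lemma juntaBGraph_connected_iff :
    (JuntaBGraph i k j z A).Connected ↔
      ∀ F G : (Fin d₂ → Bool) → Bool, (∀ a ∈ A, a ∘ j = z → F (a ∘ i) = G (a ∘ k)) →
        ∀ a' a'', F a' = G a'' := by
  rw [SimpleGraph.connected_iff, and_iff_left ⟨.inl default⟩,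
    SimpleGraph.preconnected_iff_forall_bool]
  constructor
  · intro h F G hFG a' a''
    refine h (Sum.elim F G) ?_ (.inl a') (.inr a'')
    rintro (a' | a') (a'' | a'') hadj
    · exact hadj.elim
    · obtain ⟨a, ha, rfl, rfl, hz⟩ := juntaBGraph_adj_inl_inr.mp hadj
      exact hFG a ha hz
    · obtain ⟨a, ha, rfl, rfl, hz⟩ := juntaBGraph_adj_inl_inr.mp hadj.symm
      exact (hFG a ha hz).symm
    · exact hadj.elim
  · intro h H hH
    have hLR : ∀ a' a'', H (.inl a') = H (.inr a'') :=
      h (H ∘ .inl) (H ∘ .inr) fun a ha hz => hH _ _ (juntaBGraph_adj_of_mem ha hz)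
    rintro (a' | a') (a'' | a'')
    · exact (hLR a' default).trans (hLR a'' default).symm
    · exact hLR a' a''
    · exact (hLR a'' a').symm
    · exact (hLR default a').symm.trans (hLR default a'')

end JuntaBGraph

theorem isBipartiteConnectedFamily_of_isEquivalentSetFor_junta {n d : ℕ}
    {A : Set (Fin n → Bool)} (hA : IsEquivalentSetFor A (Junta n d)) :
    IsBipartiteConnectedFamily n d A := by
  intro d₁ d₂ hd i k j hinj z
  rw [juntaBGraph_connected_iff]
  intro F G hFG a' a''
  by_contra hne
  have mem_junta (l : Fin d₂ → Fin n) (H : (Fin d₂ → Bool) → Bool) :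
      (fun a => if a ∘ j = z then H (a ∘ l) else false) ∈ Junta n d :=
    mem_junta_of_dependsOn (dependsOn_range_union (fun x y => if y = z then H x else false) l j)
      (by simpa [← hd, add_comm] using
        (ncard_union_le _ _).trans (add_le_add (ncard_range_le l) (ncard_range_le j)))
  let b := extend (Sum.elim (Sum.elim i k) j) (Sum.elim (Sum.elim a' a'') z) fun _ => false
  obtain ⟨hbi, hbk, hbj⟩ : b ∘ i = a' ∧ b ∘ k = a'' ∧ b ∘ j = z :=
    hinj.extend_sumElim_sumElim_comp a' a'' z _
  obtain ⟨a, ha, hfg⟩ := hA _ (mem_junta i F) _ (mem_junta k G) fun h => hne <| by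
    simpa [hbi, hbk, hbj] using congrFun h b
  refine hfg ?_
  split_ifs with hz
  exacts [hFG a ha hz, rfl]

lemma Finset.exists_disjoint_padding {α : Type*} [Fintype α] [DecidableEq α] {d : ℕ}
    (hd : 2 * d ≤ Fintype.card α) {R R' : Finset α} (hR : R.card ≤ d) (hR' : R'.card ≤ d) :
    ∃ I K : Finset α, I.card = d - (R ∩ R').card ∧ K.card = d - (R ∩ R').card ∧
      Disjoint I K ∧ Disjoint I (R ∩ R') ∧ Disjoint K (R ∩ R') ∧
      R ⊆ I ∪ (R ∩ R') ∧ R' ⊆ K ∪ (R ∩ R') := by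
  set C := (R ∪ R')ᶜ
  have hC : C.card + (R ∪ R').card = Fintype.card α := Finset.card_compl_add_card _
  have hU := Finset.card_union_add_card_inter R R'
  have hX := Finset.card_sdiff_add_card_inter R R'
  have hY := Finset.card_sdiff_add_card_inter R' R
  rw [Finset.inter_comm R' R] at hY
  obtain ⟨I, hXI, hI, hIcard⟩ := Finset.exists_subsuperset_card_eq
    (Finset.subset_union_left (s₁ := R \ R') (s₂ := C)) (n := d - (R ∩ R').card) (by omega)
    (by rw [Finset.card_union_of_disjoint (by grind [Finset.disjoint_left, Finset.mem_compl])]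
        omega)
  -- `I` takes only `d - |R ∩ R'| - |R \ R'|` points of `C`, which leaves enough for `K`.
  have hCI : (C ∩ I).card ≤ (I \ (R \ R')).card :=
    Finset.card_le_card (by grind [Finset.mem_compl])
  rw [Finset.card_sdiff_of_subset hXI] at hCI
  have := Finset.card_sdiff_add_card_inter C I
  obtain ⟨K, hYK, hK, hKcard⟩ := Finset.exists_subsuperset_card_eq
    (Finset.subset_union_left (s₁ := R' \ R) (s₂ := C \ I)) (n := d - (R ∩ R').card) (by omega)
    (by rw [Finset.card_union_of_disjoint (by grind [Finset.disjoint_left, Finset.mem_compl])]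
        omega)
  refine ⟨I, K, hIcard, hKcard, ?_, ?_, ?_, ?_, ?_⟩ <;>
    grind [Finset.disjoint_left, Finset.mem_compl]
lemma Finset.injective_sumElim_orderEmbOfFin {α : Type*} [LinearOrder α] {I K J : Finset α}
    {m : ℕ} (hI : I.card = m) (hK : K.card = m) (hIK : Disjoint I K) (hIJ : Disjoint I J)
    (hKJ : Disjoint K J) :
    Injective (Sum.elim (Sum.elim (I.orderEmbOfFin hI) (K.orderEmbOfFin hK))
      (J.orderEmbOfFin rfl)) := by
  refine ((I.orderEmbOfFin hI).injective.sumElim (K.orderEmbOfFin hK).injective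
    fun s t h => Finset.disjoint_left.mp hIK (I.orderEmbOfFin_mem hI s) ?_).sumElim
    (J.orderEmbOfFin rfl).injective ?_
  · exact h ▸ K.orderEmbOfFin_mem hK t
  · rintro (s | s) t h <;> simp only [Sum.elim_inl, Sum.elim_inr] at h
    · exact Finset.disjoint_left.mp hIJ (I.orderEmbOfFin_mem hI s) (h ▸ J.orderEmbOfFin_mem rfl t)
    · exact Finset.disjoint_left.mp hKJ (K.orderEmbOfFin_mem hK s) (h ▸ J.orderEmbOfFin_mem rfl t)

lemma exists_juntaBGraph_indices {n d : ℕ} (hn : 2 * d ≤ n) {R R' : Set (Fin n)}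
    (hR : R.ncard ≤ d) (hR' : R'.ncard ≤ d) :
    ∃ (d₁ d₂ : ℕ) (i k : Fin d₂ → Fin n) (j : Fin d₁ → Fin n), d₁ + d₂ = d ∧
      Injective (Sum.elim (Sum.elim i k) j) ∧ R ⊆ range i ∪ range j ∧
      R' ⊆ range k ∪ range j := by
  classical
  rw [ncard_eq_toFinset_card'] at hR hR'
  obtain ⟨I, K, hI, hK, hIK, hIJ, hKJ, hRIJ, hR'KJ⟩ :=
    Finset.exists_disjoint_padding (by simpa using hn) hR hR'
  set J := R.toFinset ∩ R'.toFinset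
  refine ⟨J.card, _, _, _, _, ?_, Finset.injective_sumElim_orderEmbOfFin hI hK hIK hIJ hKJ, ?_, ?_⟩
  · have : J.card ≤ d := (Finset.card_le_card Finset.inter_subset_left).trans hR
    omega
  · simpa [Finset.range_orderEmbOfFin, ← Finset.coe_union] using hRIJ
  · simpa [Finset.range_orderEmbOfFin, ← Finset.coe_union] using hR'KJ

theorem isEquivalentSetFor_junta_of_isBipartiteConnectedFamily {n d : ℕ} (hn : 2 * d ≤ n)
    {A : Set (Fin n → Bool)} (hA : IsBipartiteConnectedFamily n d A) :
    IsEquivalentSetFor A (Junta n d) := by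
  intro f hf g hg hfg
  by_contra! hAfg
  obtain ⟨b, hb⟩ := Function.ne_iff.mp hfg
  obtain ⟨d₁, d₂, i, k, j, hd, hinj, hfR, hgR⟩ := exists_juntaBGraph_indices hn hf hg
  have hfij : DependsOn f (range i ∪ range j) := (dependsOn_setOf_isRelevant f).mono hfR
  have hgkj : DependsOn g (range k ∪ range j) := (dependsOn_setOf_isRelevant g).mono hgR
  let Φ a' a'' := extend (Sum.elim (Sum.elim i k) j) (Sum.elim (Sum.elim a' a'') (b ∘ j)) b
  have hΦ a' a'' := hinj.extend_sumElim_sumElim_comp a' a'' (b ∘ j) b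
  have hf_Φ {a : Fin n → Bool} {a''} (hj : a ∘ j = b ∘ j) : f (Φ (a ∘ i) a'') = f a :=
    hfij.eq_of_comp_eq (hΦ _ _).1 ((hΦ _ _).2.2.trans hj.symm)
  have hg_Φ {a : Fin n → Bool} {a'} (hj : a ∘ j = b ∘ j) : g (Φ a' (a ∘ k)) = g a :=
    hgkj.eq_of_comp_eq (hΦ _ _).2.1 ((hΦ _ _).2.2.trans hj.symm)
  refine hb ?_
  rw [← hf_Φ (a'' := b ∘ k) rfl, ← hg_Φ (a' := b ∘ i) rfl]
  refine juntaBGraph_connected_iff.mp (hA d₁ d₂ hd i k j hinj (b ∘ j))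
    (fun a' => f (Φ a' (b ∘ k))) (fun a'' => g (Φ (b ∘ i) a'')) (fun a ha hj => ?_) _ _
  rw [hf_Φ hj, hg_Φ hj]
  exact hAfg a ha

theorem stmt_11_general (n d : ℕ) (hn : 2 * d ≤ n) (A : Set (Fin n → Bool)) :
    IsEquivalentSetFor A (Junta n d) ↔ IsBipartiteConnectedFamily n d A :=
  ⟨isBipartiteConnectedFamily_of_isEquivalentSetFor_junta,
    isEquivalentSetFor_junta_of_isBipartiteConnectedFamily hn⟩

/-- Let `d ≥ 1` and `n ≥ 2d`.  A set `A ⊆ {0,1}ⁿ` is an equivalent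
set for the class `d`-Junta if and only if `A` is a `d`-wise bipartite connected
family. -/
theorem stmt_11 (n d : ℕ) (hd : 1 ≤ d) (hn : 2 * d ≤ n) (A : Set (Fin n → Bool)) :
    IsEquivalentSetFor A (Junta n d) ↔ IsBipartiteConnectedFamily n d A :=
  stmt_11_general n d hn A
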